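/- arXiv:2004.14561 — 4 statements merged into one kernel-verified Lean document; each statement's English description precedes it below -/
import Mathlib

section
/- Let ε > 0 and let g : [0, ∞) → ℝ be differentiable such that for every t ≥ 0, if g(t) < 0 then g'(t) ≥ ε. Then there exists t ∈ [0, max(0, −g(0)/ε)] with g(t) ≥ 0. -/
/-! If `g` stayed negative on `[0, T]` with `T = -g 0 / ε`, its derivative would be at least `ε`
throughout, so by the mean value inequality `g T ≥ g 0 + ε * T = 0`. -/

open Set

theorem mul_sub_le_image_sub_of_le_deriv_right {g d : ℝ → ℝ} {a b C : ℝ} (hab : a ≤ b)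
    (hg : ContinuousOn g (Icc a b)) (hderiv : ∀ t ∈ Ico a b, HasDerivWithinAt g (d t) (Ici t) t)
    (hC : ∀ t ∈ Ico a b, C ≤ d t) : C * (b - a) ≤ g b - g a := by
  have hline : ∀ t, HasDerivAt (fun t => g a + C * (t - a)) C t := fun t => by
    simpa using (((hasDerivAt_id t).sub_const a).const_mul C).const_add (g a)
  have hbelow := image_le_of_deriv_right_le_deriv_boundary
    (fun t _ => (hline t).continuousAt.continuousWithinAt)
    (fun t _ => (hline t).hasDerivWithinAt) (by simp) hg hderiv hC ⟨hab, le_rfl⟩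
  linarith

/-- Differential variants (dV): if `g` is differentiable on `[0, ∞)` and `g' t ≥ ε > 0` whenever
`g t < 0`, then `g` becomes non-negative by time `max 0 (−g 0 / ε)`. -/
theorem stmt13 (ε : ℝ) (hε : 0 < ε) (g d : ℝ → ℝ)
    (hderiv : ∀ t : ℝ, 0 ≤ t → HasDerivWithinAt g (d t) (Set.Ici 0) t)
    (hprog : ∀ t : ℝ, 0 ≤ t → g t < 0 → ε ≤ d t) :
    ∃ t ∈ Set.Icc (0 : ℝ) (max 0 (-(g 0) / ε)), 0 ≤ g t := by
  by_contra! hneg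
  have hg0 : g 0 < 0 := hneg 0 ⟨le_rfl, le_max_left _ _⟩
  set T := -(g 0) / ε with hT
  have hT0 : 0 ≤ T := div_nonneg (by linarith) hε.le
  rw [max_eq_right hT0] at hneg
  have hgrowth : ε * (T - 0) ≤ g T - g 0 :=
    mul_sub_le_image_sub_of_le_deriv_right hT0
      (fun t ht => (hderiv t ht.1).continuousWithinAt.mono Icc_subset_Ici_self)
      (fun t ht => (hderiv t ht.1).mono (Ici_subset_Ici.2 ht.1))
      (fun t ht => hprog t ht.1 (hneg t (Ico_subset_Icc_self ht)))
  have hεT : ε * T = -(g 0) := by rw [hT]; field_simp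
  linarith [hneg T ⟨hT0, le_rfl⟩]
end

section
/- Let ε > 0 and let g : [0, ∞) → ℝ be differentiable (hence continuous) with g(0) ≤ 0, and suppose that for every t ≥ 0, if g(t) < 0 then g'(t) ≥ ε. Then there exists t ≥ 0 with g(t) = 0 and g(s) ≤ 0 for all s ∈ [0, t]. -/
/-!
While `g` is negative it grows at rate at least `ε`, so it cannot stay negative forever: some
`t₁ ≥ 0` has `g t₁ ≥ 0`. On `[0, t₁]` the intermediate value theorem gives a zero, and the first
time `g` becomes nonnegative is such a zero, before which `g` is negative.
-/

open Set

theorem intermediate_value_Icc_first {α δ : Type*} [ConditionallyCompleteLinearOrder α]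
    [TopologicalSpace α] [OrderTopology α] [DenselyOrdered α] [LinearOrder δ]
    [TopologicalSpace δ] [OrderClosedTopology δ] {a b : α} (hab : a ≤ b) {f : α → δ}
    (hf : ContinuousOn f (Icc a b)) {c : δ} (hfa : f a ≤ c) (hfb : c ≤ f b) :
    ∃ t ∈ Icc a b, f t = c ∧ ∀ s ∈ Icc a t, f s ≤ c := by
  set S := Icc a b ∩ f ⁻¹' Ici c
  have hS : IsClosed S := hf.preimage_isClosed_of_isClosed isClosed_Icc isClosed_Ici
  have hbS : b ∈ S := ⟨right_mem_Icc.2 hab, hfb⟩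
  have hSbdd : BddBelow S := ⟨a, fun x hx => hx.1.1⟩
  have htS : sInf S ∈ S := hS.csInf_mem ⟨b, hbS⟩ hSbdd
  set t := sInf S
  have hfirst : ∀ x ∈ Icc a t, c ≤ f x → x = t := fun x hx hcx =>
    le_antisymm hx.2 (csInf_le hSbdd ⟨⟨hx.1, hx.2.trans htS.1.2⟩, hcx⟩)
  obtain ⟨x, hx, hfx⟩ := intermediate_value_Icc htS.1.1 (hf.mono (Icc_subset_Icc_right htS.1.2))
    ⟨hfa, htS.2⟩
  have hft : f t = c := hfirst x hx hfx.ge ▸ hfx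
  refine ⟨t, htS.1, hft, fun s hs => ?_⟩
  by_contra! hcs
  exact hcs.ne' (hfirst s hs hcs.le ▸ hft)

theorem exists_nonneg_of_le_hasDerivWithinAt_of_neg {ε a : ℝ} (hε : 0 < ε) {g d : ℝ → ℝ}
    (hderiv : ∀ t, a ≤ t → HasDerivWithinAt g (d t) (Ici a) t)
    (hprog : ∀ t, a ≤ t → g t < 0 → ε ≤ d t) :
    ∃ t, a ≤ t ∧ 0 ≤ g t := by
  by_contra! hneg
  have hderiv_interior : ∀ t ∈ interior (Ici a), HasDerivAt g (d t) t := fun t ht => by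
    rw [interior_Ici] at ht
    exact (hderiv t ht.le).hasDerivAt (Ici_mem_nhds ht)
  have hgrowth : ∀ t, a ≤ t → ε * (t - a) ≤ g t - g a := fun t ht =>
    (convex_Ici a).mul_sub_le_image_sub_of_le_deriv
      (fun t ht => (hderiv t ht).continuousWithinAt)
      (fun t ht => (hderiv_interior t ht).differentiableAt.differentiableWithinAt)
      (fun t ht => (hderiv_interior t ht).deriv ▸
        hprog t (interior_subset ht) (hneg t (interior_subset ht)))
      a self_mem_Ici t ht ht
  have hga := hneg a le_rfl
  have hT : a ≤ a - g a / ε := (le_sub_self_iff a).2 (div_nonpos_of_nonpos_of_nonneg hga.le hε.le)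
  have hgT := hgrowth _ hT
  rw [sub_sub_cancel_left, mul_neg, mul_div_cancel₀ _ hε.ne'] at hgT
  linarith [hneg _ hT]

/-- Equational differential variants (dV₌): if `g` is differentiable on `[0, ∞)`, `g 0 ≤ 0`, and
`g' t ≥ ε > 0` whenever `g t < 0`, then `g` reaches `0` while staying non-positive beforehand. -/
theorem stmt16 (ε : ℝ) (hε : 0 < ε) (g d : ℝ → ℝ)
    (hderiv : ∀ t : ℝ, 0 ≤ t → HasDerivWithinAt g (d t) (Set.Ici 0) t)
    (hg0 : g 0 ≤ 0)
    (hprog : ∀ t : ℝ, 0 ≤ t → g t < 0 → ε ≤ d t) :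
    ∃ t : ℝ, 0 ≤ t ∧ g t = 0 ∧ ∀ s ∈ Set.Icc (0 : ℝ) t, g s ≤ 0 := by
  obtain ⟨t₁, ht₁, hgt₁⟩ := exists_nonneg_of_le_hasDerivWithinAt_of_neg hε hderiv hprog
  have hcont : ContinuousOn g (Icc 0 t₁) := fun t ht =>
    (hderiv t ht.1).continuousWithinAt.mono Icc_subset_Ici_self
  obtain ⟨t, ⟨ht, -⟩, hgt, hle⟩ := intermediate_value_Icc_first ht₁ hcont hg0 hgt₁
  exact ⟨t, ht, hgt, hle⟩
end

section
/- Let P, Q ⊆ ℝⁿ be closed sets, let φ : [0, τ] → ℝⁿ be continuous with φ(0) ∉ P and φ(τ) ∈ P, and suppose that for every t ∈ [0, τ], if φ(s) ∉ P for all s ∈ [0, t], then φ(t) ∈ Q. Then there exists t ∈ [0, τ] with φ(t) ∈ P and φ(s) ∈ Q for all s ∈ [0, t]. -/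
open Set

section FirstHittingTime

variable {α X : Type*} [ConditionallyCompleteLinearOrder α] [TopologicalSpace α]
  [OrderTopology α] [TopologicalSpace X]

/-- The hitting time `t` is the infimum of the closed set `Icc a b ∩ φ ⁻¹' P`. -/
theorem ContinuousOn.exists_first_mem_of_isClosed {φ : α → X} {P : Set X} {a b : α}
    (hφ : ContinuousOn φ (Icc a b)) (hP : IsClosed P) (hab : a ≤ b) (hb : φ b ∈ P) :
    ∃ t ∈ Icc a b, φ t ∈ P ∧ ∀ s ∈ Ico a t, φ s ∉ P := by
  set S := Icc a b ∩ φ ⁻¹' P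
  have hS : IsLeast S (sInf S) :=
    (hφ.preimage_isClosed_of_isClosed isClosed_Icc hP).isLeast_csInf
      ⟨b, right_mem_Icc.2 hab, hb⟩ ⟨a, fun _ hs => hs.1.1⟩
  refine ⟨sInf S, hS.1.1, hS.1.2, fun s hs hsP => ?_⟩
  exact (hS.2 ⟨⟨hs.1, hs.2.le.trans hS.1.1.2⟩, hsP⟩).not_gt hs.2

theorem ContinuousOn.mapsTo_Icc_of_mapsTo_Ico [DenselyOrdered α] {φ : α → X} {Q : Set X}
    {a t : α} (hφ : ContinuousOn φ (Icc a t)) (hQ : IsClosed Q) (hat : a < t)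
    (h : MapsTo φ (Ico a t) Q) : MapsTo φ (Icc a t) Q := by
  rw [← closure_Ico hat.ne] at hφ ⊢
  simpa only [hQ.closure_eq] using h.closure_of_continuousOn hφ

end FirstHittingTime

/-- Topological refinement (COR, closed case): a continuous trajectory on `[0, τ]` that stays in
the closed set `Q` while it has not yet reached the closed set `P`, starts outside `P`, and
reaches `P` at time `τ`, actually reaches `P` without ever leaving `Q`. -/
theorem stmt17 {n : ℕ} (P Q : Set (EuclideanSpace ℝ (Fin n)))
    (hP : IsClosed P) (hQ : IsClosed Q) (τ : ℝ) (hτ : 0 ≤ τ)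
    (φ : ℝ → EuclideanSpace ℝ (Fin n)) (hcont : ContinuousOn φ (Set.Icc 0 τ))
    (h0 : φ 0 ∉ P) (hτP : φ τ ∈ P)
    (hstay : ∀ t ∈ Set.Icc (0 : ℝ) τ, (∀ s ∈ Set.Icc (0 : ℝ) t, φ s ∉ P) → φ t ∈ Q) :
    ∃ t ∈ Set.Icc (0 : ℝ) τ, φ t ∈ P ∧ ∀ s ∈ Set.Icc (0 : ℝ) t, φ s ∈ Q := by
  obtain ⟨t, ht, htP, hfirst⟩ := hcont.exists_first_mem_of_isClosed hP hτ hτP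
  have ht_pos : 0 < t := ht.1.lt_of_ne fun h => h0 (h ▸ htP)
  refine ⟨t, ht, htP, ?_⟩
  refine (hcont.mono (Icc_subset_Icc_right ht.2)).mapsTo_Icc_of_mapsTo_Ico hQ ht_pos fun s hs => ?_
  exact hstay s ⟨hs.1, hs.2.le.trans ht.2⟩ fun u hu => hfirst u ⟨hu.1, hu.2.trans_lt hs.2⟩
end

section
/- Let P, Q ⊆ ℝⁿ be open sets, let φ : [0, τ] → ℝⁿ be continuous with φ(0) ∉ P and φ(τ) ∈ P, and suppose that for every t ∈ [0, τ], if φ(s) ∉ P for all s ∈ [0, t], then φ(t) ∈ Q. Then there exists t ∈ [0, τ] with φ(t) ∈ P and φ(s) ∈ Q for all s ∈ [0, t]. -/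
/-!
Let `T` be the first entrance time of `φ` into `P`. Since `P` is open and `φ(0) ∉ P`, the
trajectory is not yet in `P` at time `T`, so it stays in `Q` on `[0, T]`. Since `Q` is open, it
stays in `Q` a little longer, and by the choice of `T` it enters `P` during that extra time.
-/

open Set Filter Topology

theorem ContinuousOn.exists_first_entrance {α X : Type*} [ConditionallyCompleteLinearOrder α]
    [TopologicalSpace α] [OrderTopology α] [DenselyOrdered α] [TopologicalSpace X]
    {φ : α → X} {P : Set X} {a b : α} (hφ : ContinuousOn φ (Icc a b)) (hP : IsOpen P)
    (hab : a ≤ b) (ha : φ a ∉ P) (hb : φ b ∈ P) :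
    ∃ T ∈ Ico a b, (∀ s ∈ Icc a T, φ s ∉ P) ∧ ∀ c, T < c → ∃ s ∈ Ioo T c, s ≤ b ∧ φ s ∈ P := by
  set S := {t ∈ Icc a b | φ t ∈ P}
  have hSne : S.Nonempty := ⟨b, ⟨hab, le_rfl⟩, hb⟩
  have hSbdd : BddBelow S := ⟨a, fun t ht => ht.1.1⟩
  set T := sInf S
  have haT : a ≤ T := le_csInf hSne fun t ht => ht.1.1
  have hTb : T ≤ b := csInf_le hSbdd ⟨⟨hab, le_rfl⟩, hb⟩
  have hbefore : ∀ s ∈ Ico a T, φ s ∉ P := fun s hs hsP =>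
    notMem_of_lt_csInf hs.2 hSbdd ⟨⟨hs.1, hs.2.le.trans hTb⟩, hsP⟩
  -- `φ⁻¹ P` is relatively open, so if it contained `T` it would contain times just before `T`.
  have hTP : φ T ∉ P := by
    intro hTP
    have haT' : a < T := haT.lt_of_ne fun h => ha (h ▸ hTP)
    have := nhdsLT_neBot_of_exists_lt ⟨a, haT'⟩
    have hnear : ∀ᶠ s in 𝓝[<] T, φ s ∈ P :=
      (hφ T ⟨haT, hTb⟩).mono_of_mem_nhdsWithin (Icc_mem_nhdsLT_of_mem ⟨haT', hTb⟩)
        (hP.mem_nhds hTP)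
    obtain ⟨s, hsP, hs⟩ := (hnear.and (Ioo_mem_nhdsLT haT')).exists
    exact hbefore s ⟨hs.1.le, hs.2⟩ hsP
  refine ⟨T, ⟨haT, hTb.lt_of_ne fun h => hTP (h ▸ hb)⟩, fun s hs => ?_, fun c hc => ?_⟩
  · rcases hs.2.lt_or_eq with h | rfl
    exacts [hbefore s ⟨hs.1, h⟩, hTP]
  · obtain ⟨s, ⟨hs, hsP⟩, hsc⟩ := exists_lt_of_csInf_lt hSne hc
    have hTs : T < s := (csInf_le hSbdd ⟨hs, hsP⟩).lt_of_ne fun h => hTP (by rwa [← h] at hsP)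
    exact ⟨s, ⟨hTs, hsc⟩, hs.2, hsP⟩

/-- Topological refinement (COR, open case): a continuous trajectory on `[0, τ]` that stays in
the open set `Q` while it has not yet reached the open set `P`, starts outside `P`, and reaches
`P` at time `τ`, actually reaches `P` without ever leaving `Q`. -/
theorem stmt18 {n : ℕ} (P Q : Set (EuclideanSpace ℝ (Fin n)))
    (hP : IsOpen P) (hQ : IsOpen Q) (τ : ℝ) (hτ : 0 ≤ τ)
    (φ : ℝ → EuclideanSpace ℝ (Fin n)) (hcont : ContinuousOn φ (Set.Icc 0 τ))
    (h0 : φ 0 ∉ P) (hτP : φ τ ∈ P)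
    (hstay : ∀ t ∈ Set.Icc (0 : ℝ) τ, (∀ s ∈ Set.Icc (0 : ℝ) t, φ s ∉ P) → φ t ∈ Q) :
    ∃ t ∈ Set.Icc (0 : ℝ) τ, φ t ∈ P ∧ ∀ s ∈ Set.Icc (0 : ℝ) t, φ s ∈ Q := by
  obtain ⟨T, ⟨h0T, hTτ⟩, hbefore, hentry⟩ := hcont.exists_first_entrance hP hτ h0 hτP
  have hQ_upto : ∀ s ∈ Icc 0 T, φ s ∈ Q := fun s hs =>
    hstay s ⟨hs.1, hs.2.trans hTτ.le⟩ fun u hu => hbefore u ⟨hu.1, hu.2.trans hs.2⟩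
  obtain ⟨c, hTc, hcQ⟩ : ∃ c ∈ Ioi T, Ico T c ⊆ φ ⁻¹' Q :=
    mem_nhdsGE_iff_exists_Ico_subset.1 <|
      (hcont T ⟨h0T, hTτ.le⟩).mono_of_mem_nhdsWithin (Icc_mem_nhdsGE_of_mem ⟨h0T, hTτ⟩)
        (hQ.mem_nhds (hQ_upto T ⟨h0T, le_rfl⟩))
  obtain ⟨t, ⟨hTt, htc⟩, htτ, htP⟩ := hentry c hTc
  refine ⟨t, ⟨h0T.trans hTt.le, htτ⟩, htP, fun s hs => ?_⟩
  rcases le_or_gt s T with hsT | hTs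
  · exact hQ_upto s ⟨hs.1, hsT⟩
  · exact hcQ ⟨hTs.le, hs.2.trans_lt htc⟩
end
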